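/- Let (F_k)_{k∈K} be a closed oriented triangulated surface with vertex list r : ι → ℝ³, and let V(r) = (1/6) Σ_F r_{F₀} · (r_{F₁} × r_{F₂}) be the enclosed signed volume. Then V is translation invariant: for every t ∈ ℝ³, V((r_a + t)_{a∈ι}) = V(r); equivalently, the signed volume does not depend on the choice of origin. -/

import Mathlib

open Matrix BigOperators

/-- The enclosed signed volume of a triangulated surface with faces `F` and vertex list `r`:
`V = (1/6) ∑_F r_{F₀} · (r_{F₁} ⨯₃ r_{F₂})`. -/
noncomputable def polyVol {K ι : Type*} [Fintype K] (F : K → ι × ι × ι)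
    (r : ι → Fin 3 → ℝ) : ℝ :=
  (1 / 6 : ℝ) * ∑ k : K, r (F k).1 ⬝ᵥ ((r (F k).2.1) ⨯₃ (r (F k).2.2))

/-- The multiset of directed edges `(T₀,T₁), (T₁,T₂), (T₂,T₀)` over all faces of a
triangulated surface. -/
def surfEdges {K ι : Type*} [Fintype K] (F : K → ι × ι × ι) : Multiset (ι × ι) :=
  (Finset.univ : Finset K).val.bind fun k =>
    {((F k).1, (F k).2.1), ((F k).2.1, (F k).2.2), ((F k).2.2, (F k).1)}

/-- For a closed oriented triangulated surface, the enclosed signed volume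
is translation invariant: `V(r + t) = V(r)` for every `t ∈ ℝ³`. -/
theorem stmt8 {K ι : Type*} [Fintype K] (F : K → ι × ι × ι) (r : ι → Fin 3 → ℝ)
    (hclosed : surfEdges F = (surfEdges F).map Prod.swap) (t : Fin 3 → ℝ) :
    polyVol F (fun a => r a + t) = polyVol F r := by
  set E : ι × ι → Fin 3 → ℝ := fun p => r p.1 ⨯₃ r p.2 with hEdef
  have hzero : ((surfEdges F).map E).sum = 0 := by
    have h1 : ((surfEdges F).map E).sum = -((surfEdges F).map E).sum := by
      conv_lhs => rw [hclosed]
      rw [Multiset.map_map]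
      have : (E ∘ Prod.swap) = fun p : ι × ι => -(E p) := by
        funext p
        simp [hEdef, Function.comp, cross_anticomm]
      rw [this]
      simp
    have h2 : ((surfEdges F).map E).sum + ((surfEdges F).map E).sum = 0 := by
      nth_rewrite 2 [h1]; simp
    funext i
    have := congrFun h2 i
    simpa using add_self_eq_zero.mp this
  have hsum : ((surfEdges F).map E).sum
      = ∑ k : K, (E ((F k).1, (F k).2.1) + E ((F k).2.1, (F k).2.2)
          + E ((F k).2.2, (F k).1)) := by
    rw [surfEdges, Multiset.map_bind, Multiset.sum_bind]
    rw [← Finset.sum_map_val]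
    refine congrArg Multiset.sum (Multiset.map_congr rfl fun k _ => ?_)
    simp [add_assoc]
  unfold polyVol
  congr 1
  have key : ∀ a b c : Fin 3 → ℝ,
      (a + t) ⬝ᵥ ((b + t) ⨯₃ (c + t))
        = a ⬝ᵥ (b ⨯₃ c) + t ⬝ᵥ (a ⨯₃ b + b ⨯₃ c + c ⨯₃ a) := by
    intro a b c
    simp [cross_apply, dotProduct, Fin.sum_univ_three, Pi.add_apply]
    ring
  calc ∑ k : K, ((fun a => r a + t) (F k).1) ⬝ᵥ
        (((fun a => r a + t) (F k).2.1) ⨯₃ ((fun a => r a + t) (F k).2.2))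
      = ∑ k : K, (r (F k).1 ⬝ᵥ (r (F k).2.1 ⨯₃ r (F k).2.2)
          + t ⬝ᵥ (E ((F k).1, (F k).2.1) + E ((F k).2.1, (F k).2.2)
              + E ((F k).2.2, (F k).1))) := by
        refine Finset.sum_congr rfl fun k _ => ?_
        simpa [hEdef] using key (r (F k).1) (r (F k).2.1) (r (F k).2.2)
    _ = ∑ k : K, r (F k).1 ⬝ᵥ (r (F k).2.1 ⨯₃ r (F k).2.2)
          + t ⬝ᵥ ∑ k : K, (E ((F k).1, (F k).2.1) + E ((F k).2.1, (F k).2.2)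
              + E ((F k).2.2, (F k).1)) := by
        rw [Finset.sum_add_distrib]
        congr 1
        simp [dotProduct, Finset.mul_sum]
        rw [Finset.sum_comm]
    _ = ∑ k : K, r (F k).1 ⬝ᵥ (r (F k).2.1 ⨯₃ r (F k).2.2) := by
        rw [← hsum, hzero]
        simp
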